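/- For any pure state |ψ⟩ on ℂ^d ⊗ ℂ^d, the fidelity between its two marginals satisfies F(ψ_A, ψ_B) ≥ |Tr(P_as ψ) − Tr(P_s ψ)|. -/

import Mathlib

open scoped Matrix Kronecker ComplexOrder

noncomputable section

namespace QEMD

variable {m n : Type*} [Fintype m] [Fintype n] [DecidableEq m] [DecidableEq n]

/-- Total square root: the PSD square root if `A` is PSD, else `0`. -/
def msqrt (A : Matrix n n ℂ) : Matrix n n ℂ :=
  letI := Classical.dec A.PosSemidef
  if h : A.PosSemidef then
    h.1.eigenvectorUnitary.1 * Matrix.diagonal ((↑) ∘ Real.sqrt ∘ h.1.eigenvalues) *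
      (star h.1.eigenvectorUnitary : Matrix n n ℂ)
  else 0

/-- Trace norm `‖A‖₁ = Tr √(AᴴA)`. -/
def traceNorm (A : Matrix n n ℂ) : ℝ :=
  ((msqrt (Aᴴ * A)).trace).re

/-- Trace distance `D(ρ,σ) = ½‖ρ-σ‖₁`. -/
def traceDist (ρ σ : Matrix n n ℂ) : ℝ := traceNorm (ρ - σ) / 2

/-- Fidelity `F(ρ,σ) = Tr √(√ρ σ √ρ)`. -/
def fidelity (ρ σ : Matrix n n ℂ) : ℝ :=
  ((msqrt (msqrt ρ * σ * msqrt ρ)).trace).re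

/-- Density matrix predicate. -/
def IsDensity (ρ : Matrix n n ℂ) : Prop := ρ.PosSemidef ∧ ρ.trace = 1

/-- Projector `|v⟩⟨v|` onto a vector. -/
def proj (v : n → ℂ) : Matrix n n ℂ := Matrix.of fun i j => v i * star (v j)

/-- Partial trace over the first (left) factor. -/
def traceLeft (ρ : Matrix (m × n) (m × n) ℂ) : Matrix n n ℂ :=
  Matrix.of fun i j => ∑ k, ρ (k, i) (k, j)

/-- Partial trace over the second (right) factor. -/
def traceRight (ρ : Matrix (m × n) (m × n) ℂ) : Matrix m m ℂ :=
  Matrix.of fun i j => ∑ k, ρ (i, k) (j, k)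

/-- The swap operator `S|αβ⟩ = |βα⟩` on `ℂ^d ⊗ ℂ^d`. -/
def swap (d : ℕ) : Matrix (Fin d × Fin d) (Fin d × Fin d) ℂ :=
  Matrix.of fun p q => if p.1 = q.2 ∧ p.2 = q.1 then 1 else 0

/-- Projection onto the symmetric subspace, `P_s = (I + S)/2`. -/
def Psym (d : ℕ) : Matrix (Fin d × Fin d) (Fin d × Fin d) ℂ := (2:ℂ)⁻¹ • (1 + swap d)

/-- Projection onto the antisymmetric subspace, `P_as = (I - S)/2`. -/
def Pasym (d : ℕ) : Matrix (Fin d × Fin d) (Fin d × Fin d) ℂ := (2:ℂ)⁻¹ • (1 - swap d)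

/-- `ρAB` is a quantum coupling of `ρA` and `ρB`. -/
def IsCoupling (ρAB : Matrix (m × n) (m × n) ℂ) (ρA : Matrix m m ℂ)
    (ρB : Matrix n n ℂ) : Prop :=
  IsDensity ρAB ∧ traceRight ρAB = ρA ∧ traceLeft ρAB = ρB

/-- The maximally entangled vector `|Φ⟩ = (1/√d) ∑ᵢ |i⟩|i⟩`. -/
def maxEnt (d : ℕ) : Fin d × Fin d → ℂ :=
  fun p => if p.1 = p.2 then ((1 / Real.sqrt d : ℝ) : ℂ) else 0

/-!
Write `ψ = ∑ M i j |i⟩|j⟩`. The marginals are `M Mᴴ` and `Mᵀ Mᵀᴴ`, and since `P_as - P_s = -S`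
for the swap `S`, the right-hand side is `|Re ⟨ψ|S|ψ⟩|` with `⟨ψ|S|ψ⟩ = Tr (Mᴴ Mᵀ)`. It therefore
suffices that `|Tr (Mᴴ N)| ≤ F(M Mᴴ, N Nᴴ)` for all square `M`, `N`. With `R = √(M Mᴴ)` and the polar
decompositions `Mᴴ = K₁ R` and `Nᴴ R = K₂ P`, where `P = √(R N Nᴴ R)`, one gets
`Tr (Mᴴ N) = Tr (P K₂ᴴ K₁)`, and `|Tr (P W)| ≤ Tr P` for every unitary `W`: in an eigenbasis
of `P` this is the bound `|W i i| ≤ 1` on the diagonal entries of a unitary matrix.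
-/

open Matrix

section PolarDecomposition

variable {ι : Type*} [Fintype ι] [DecidableEq ι]

lemma _root_.Matrix.PosSemidef.norm_trace_mul_unitary_le {P W : Matrix ι ι ℂ}
    (hP : P.PosSemidef) (hW : W ∈ unitaryGroup ι ℂ) : ‖(P * W).trace‖ ≤ P.trace.re := by
  set U := hP.1.eigenvectorUnitary
  set V := star (U : Matrix ι ι ℂ) * W * U
  have hV : V ∈ unitaryGroup ι ℂ := mul_mem (mul_mem (Unitary.star_mem U.2) hW) U.2
  have htr : (P * W).trace = ∑ i, (hP.1.eigenvalues i : ℂ) * V i i := by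
    conv_lhs => rw [hP.1.spectral_theorem, Unitary.conjStarAlgAut_apply, Matrix.mul_assoc,
      Matrix.mul_assoc, trace_mul_comm]
    simp only [V, U, trace, diag, diagonal_mul, Matrix.mul_assoc, Function.comp_apply,
      RCLike.ofReal_eq_complex_ofReal]
  rw [htr, hP.1.trace_eq_sum_eigenvalues, Complex.re_sum]
  refine (norm_sum_le _ _).trans (Finset.sum_le_sum fun i _ => ?_)
  rw [norm_mul, Complex.norm_real, Real.norm_of_nonneg (hP.eigenvalues_nonneg i)]
  simpa using mul_le_of_le_one_right (hP.eigenvalues_nonneg i) (entry_norm_bound_of_unitary hV i i)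

/-- Normalise the nonzero columns and extend them to an orthonormal basis. -/
lemma _root_.Matrix.exists_unitary_mul_diagonal_of_conjTranspose_mul_self_eq {Y : Matrix ι ι ℂ}
    {r : ι → ℝ} (hY : Yᴴ * Y = diagonal fun i => ((r i ^ 2 : ℝ) : ℂ)) :
    ∃ K ∈ unitaryGroup ι ℂ, Y = K * diagonal fun i => (r i : ℂ) := by
  set c : ι → EuclideanSpace ℂ ι := fun j => WithLp.toLp 2 fun k => Y k j
  have inner_c (i j : ι) : inner ℂ (c i) (c j) = (Yᴴ * Y) i j := by
    simp [c, EuclideanSpace.inner_toLp_toLp, mul_apply, dotProduct, mul_comm]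
  set s : Set ι := {j | r j ≠ 0}
  set v : ι → EuclideanSpace ℂ ι := fun j => ((r j : ℂ)⁻¹) • c j
  have hv : Orthonormal ℂ (s.domRestrict v) := by
    rw [orthonormal_iff_ite]
    rintro ⟨i, hi⟩ ⟨j, hj⟩
    simp only [Set.domRestrict_apply, v, inner_smul_left, inner_smul_right, inner_c, hY,
      diagonal_apply, Subtype.mk.injEq]
    split_ifs with hij
    · subst hij
      have : (r i : ℂ) ≠ 0 := by exact_mod_cast hi
      simp only [map_inv₀, Complex.conj_ofReal, Complex.ofReal_pow]
      field_simp
    · simp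
  obtain ⟨b, hb⟩ := hv.exists_orthonormalBasis_extension_of_card_eq (by simp)
  refine ⟨(EuclideanSpace.basisFun ι ℂ).toBasis.toMatrix b.toBasis,
    (EuclideanSpace.basisFun ι ℂ).toMatrix_orthonormalBasis_mem_unitary b, ?_⟩
  ext k j
  rw [mul_diagonal, Module.Basis.toMatrix_apply]
  by_cases hj : r j = 0
  · have hc : c j = 0 := by
      rw [← inner_self_eq_zero (𝕜 := ℂ), inner_c, hY, diagonal_apply_eq, hj]
      simp
    simpa [hj] using congrFun (congrArg WithLp.ofLp hc) k
  · have : (r j : ℂ) ≠ 0 := by exact_mod_cast hj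
    simp [hb j hj, v, c, mul_comm _ (r j : ℂ), this]

lemma posSemidef_msqrt (A : Matrix ι ι ℂ) : (msqrt A).PosSemidef := by
  unfold msqrt
  split_ifs with hA
  · refine (posSemidef_diagonal_iff.mpr fun i => ?_).mul_mul_conjTranspose_same _
    simp [Real.sqrt_nonneg]
  · exact .zero

lemma exists_unitary_mul_msqrt (Y : Matrix ι ι ℂ) :
    ∃ K ∈ unitaryGroup ι ℂ, Y = K * msqrt (Yᴴ * Y) := by
  have hA : (Yᴴ * Y).PosSemidef := posSemidef_conjTranspose_mul_self Y
  set U : Matrix ι ι ℂ := (hA.1.eigenvectorUnitary : Matrix ι ι ℂ)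
  have hU : U ∈ unitaryGroup ι ℂ := hA.1.eigenvectorUnitary.2
  set D : Matrix ι ι ℂ := diagonal fun i => (√(hA.1.eigenvalues i) : ℂ)
  have hsqrt : msqrt (Yᴴ * Y) = U * D * star U := by rw [msqrt, dif_pos hA]; rfl
  have hdiag : (Y * U)ᴴ * (Y * U) =
      diagonal fun i => ((√(hA.1.eigenvalues i) ^ 2 : ℝ) : ℂ) := by
    simp_rw [Real.sq_sqrt (hA.eigenvalues_nonneg _)]
    convert hA.1.conjStarAlgAut_star_eigenvectorUnitary using 1
    · simp [U, conjTranspose_mul, star_eq_conjTranspose, Matrix.mul_assoc]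
    · rfl
  obtain ⟨K, hK, hYU⟩ := exists_unitary_mul_diagonal_of_conjTranspose_mul_self_eq hdiag
  refine ⟨K * star U, mul_mem hK (Unitary.star_mem hU), ?_⟩
  calc Y = Y * U * star U := by rw [Matrix.mul_assoc, mem_unitaryGroup_iff.mp hU, Matrix.mul_one]
    _ = K * star U * (U * D * star U) := by
      rw [hYU]
      simp only [Matrix.mul_assoc, ← Matrix.mul_assoc (star U) U, mem_unitaryGroup_iff'.mp hU,
        Matrix.one_mul, D]
    _ = K * star U * msqrt (Yᴴ * Y) := by rw [hsqrt]

lemma norm_trace_conjTranspose_mul_le_fidelity (M N : Matrix ι ι ℂ) :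
    ‖(Mᴴ * N).trace‖ ≤ fidelity (M * Mᴴ) (N * Nᴴ) := by
  obtain ⟨K₁, hK₁, hM⟩ := exists_unitary_mul_msqrt Mᴴ
  rw [conjTranspose_conjTranspose] at hM
  set R := msqrt (M * Mᴴ)
  have hR : Rᴴ = R := (posSemidef_msqrt _).1
  obtain ⟨K₂, hK₂, hRN⟩ := exists_unitary_mul_msqrt (Nᴴ * R)
  rw [conjTranspose_mul, conjTranspose_conjTranspose, hR, ← Matrix.mul_assoc] at hRN
  set P := msqrt (R * N * Nᴴ * R)
  have hP : P.PosSemidef := posSemidef_msqrt _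
  have hNR : R * N = P * star K₂ := by
    simpa [conjTranspose_mul, hR, hP.1.eq, star_eq_conjTranspose] using congrArg conjTranspose hRN
  have htr : (Mᴴ * N).trace = (P * (star K₂ * K₁)).trace := by
    rw [hM, Matrix.mul_assoc, hNR, trace_mul_comm, Matrix.mul_assoc]
  have hfid : fidelity (M * Mᴴ) (N * Nᴴ) = P.trace.re := by
    simp only [fidelity, P, R, Matrix.mul_assoc]
  rw [htr, hfid]
  exact hP.norm_trace_mul_unitary_le (mul_mem (Unitary.star_mem hK₂) hK₁)

end PolarDecomposition

lemma traceRight_proj {ι κ : Type*} [Fintype κ] (ψ : ι × κ → ℂ) :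
    traceRight (proj ψ) = of (Function.curry ψ) * (of (Function.curry ψ))ᴴ := by
  ext i j
  simp [traceRight, proj, mul_apply]

lemma traceLeft_proj {ι κ : Type*} [Fintype ι] (ψ : ι × κ → ℂ) :
    traceLeft (proj ψ) = (of (Function.curry ψ))ᵀ * (of (Function.curry ψ))ᵀᴴ := by
  ext i j
  simp [traceLeft, proj, mul_apply]

lemma trace_swap_mul_proj {d : ℕ} (ψ : Fin d × Fin d → ℂ) :
    (swap d * proj ψ).trace = ((of (Function.curry ψ))ᴴ * (of (Function.curry ψ))ᵀ).trace := by
  simpa [trace, mul_apply, swap, proj, Fintype.sum_prod_type, ite_and, mul_comm] using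
    Finset.sum_comm

lemma trace_Pasym_mul_sub_trace_Psym_mul {d : ℕ} (ρ : Matrix (Fin d × Fin d) (Fin d × Fin d) ℂ) :
    (Pasym d * ρ).trace - (Psym d * ρ).trace = -(swap d * ρ).trace := by
  simp only [Pasym, Psym, Matrix.smul_mul, trace_smul, Matrix.sub_mul, Matrix.add_mul, trace_sub,
    trace_add, smul_eq_mul]
  ring

theorem stmt2_general (d : ℕ) (ψ : Fin d × Fin d → ℂ) :
    fidelity (traceRight (proj ψ)) (traceLeft (proj ψ))
      ≥ |((Pasym d * proj ψ).trace).re - ((Psym d * proj ψ).trace).re| := by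
  set M := of (Function.curry ψ)
  rw [traceRight_proj, traceLeft_proj, ← Complex.sub_re, trace_Pasym_mul_sub_trace_Psym_mul,
    trace_swap_mul_proj, Complex.neg_re, abs_neg]
  exact (Complex.abs_re_le_norm _).trans (norm_trace_conjTranspose_mul_le_fidelity M Mᵀ)

theorem stmt2 (d : ℕ) (ψ : Fin d × Fin d → ℂ) (hψ : ∑ p, ‖ψ p‖ ^ 2 = 1) :
    fidelity (traceRight (proj ψ)) (traceLeft (proj ψ))
      ≥ |((Pasym d * proj ψ).trace).re - ((Psym d * proj ψ).trace).re| :=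
  stmt2_general d ψ
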